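/- Let a > 0, σ > 1, s ∈ [−1, 3/2), α ≥ 1 and β ≥ 1. There exists a constant C = C(s) > 0 such that for every f ∈ Ḣ^s_{a,σ}(ℝ³) ∩ Ḣ^{s+α}_{a,σ}(ℝ³) and g ∈ Ḣ^s_{a,σ}(ℝ³) ∩ Ḣ^{s+β}_{a,σ}(ℝ³) with ∫_{ℝ³} e^{(a/σ)|ξ|^{1/σ}} |f̂(ξ)| dξ < ∞ and ∫_{ℝ³} e^{(a/σ)|ξ|^{1/σ}} |ĝ(ξ)| dξ < ∞, the product fg belongs to Ḣ^{s+1}_{a,σ}(ℝ³) and ‖fg‖_{Ḣ^{s+1}_{a,σ}} ≤ C [ ‖e^{(a/σ)|·|^{1/σ}} f̂‖_{L¹} · ‖g‖_{Ḣ^s_{a,σ}}^{1−1/β} ‖g‖_{Ḣ^{s+β}_{a,σ}}^{1/β} + ‖e^{(a/σ)|·|^{1/σ}} ĝ‖_{L¹} · ‖f‖_{Ḣ^s_{a,σ}}^{1−1/α} ‖f‖_{Ḣ^{s+α}_{a,σ}}^{1/α} ]. -/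

import Mathlib

open MeasureTheory
open scoped ENNReal NNReal

noncomputable section

/-- Frequency space `ℝ³`. -/
abbrev R3 := EuclideanSpace ℝ (Fin 3)

/-- Squared Sobolev–Gevrey norm `‖f‖²_{Ḣ^s_{a,σ}} = ∫ |ξ|^{2s} e^{2a|ξ|^{1/σ}} |f̂(ξ)|² dξ`,
expressed on the Fourier side: `F` plays the role of the Fourier transform `f̂` of `f`. -/
def gevreySq (a σ s : ℝ) (F : R3 → ℂ) : ℝ≥0∞ :=
  ∫⁻ ξ : R3, ENNReal.ofReal (‖ξ‖ ^ (2 * s) * Real.exp (2 * a * ‖ξ‖ ^ (1 / σ))) *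
    (‖F ξ‖₊ : ℝ≥0∞) ^ 2

/-- The Sobolev–Gevrey norm `‖f‖_{Ḣ^s_{a,σ}}`, on the Fourier side. -/
def gevreyNorm (a σ s : ℝ) (F : R3 → ℂ) : ℝ≥0∞ := gevreySq a σ s F ^ (1 / 2 : ℝ)

/-- The exponentially weighted `L¹` norm `‖e^{c|·|^{1/σ}} f̂‖_{L¹}`. -/
def weightedL1 (c σ : ℝ) (F : R3 → ℂ) : ℝ≥0∞ :=
  ∫⁻ ξ : R3, ENNReal.ofReal (Real.exp (c * ‖ξ‖ ^ (1 / σ))) * (‖F ξ‖₊ : ℝ≥0∞)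

/-- Convolution on the Fourier side: up to a normalizing constant (absorbed in the
constant `C` below), `fconv f̂ ĝ` is the Fourier transform of the pointwise product `f·g`. -/
def fconv (F G : R3 → ℂ) (ξ : R3) : ℂ := ∫ η : R3, F (ξ - η) * G η

/-!
On the Fourier side the product `fg` is the convolution `f̂ ⋆ ĝ`. For `0 ≤ x ≤ y` and
`θ = 1/σ ≤ 1`, Bernoulli's inequality gives `(x + y)^θ ≤ θ x^θ + y^θ`, so at `ξ = ζ + η` the
weight `|ξ|^{s+1} e^{a|ξ|^{1/σ}}` is at most `2^{s+1}` times `e^{(a/σ)|·|^{1/σ}}` at the smaller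
of `ζ, η` and the full weight at the larger one. Young's inequality `‖u ⋆ v‖₂ ≤ ‖u‖₂ ‖v‖₁` then
bounds `‖fg‖_{Ḣ^{s+1}}` by `2^{s+1}(‖e^{(a/σ)|·|^{1/σ}} f̂‖_{L¹} ‖g‖_{Ḣ^{s+1}} + (f ↔ g))`, and
Hölder's inequality interpolates `Ḣ^{s+1}` between `Ḣ^s` and `Ḣ^{s+β}`, since
`s + 1 = (1 - 1/β) s + (s + β)/β`.
-/

theorem Real.rpow_add_le_mul_rpow_add_rpow {x y θ : ℝ} (hx : 0 ≤ x) (hxy : x ≤ y)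
    (hθ0 : 0 ≤ θ) (hθ1 : θ ≤ 1) : (x + y) ^ θ ≤ θ * x ^ θ + y ^ θ := by
  rcases hx.eq_or_lt with rfl | hx
  · simp only [zero_add]
    have : 0 ≤ θ * (0 : ℝ) ^ θ := by positivity
    linarith
  have hy : 0 < y := hx.trans_le hxy
  set t := x / y
  have ht0 : 0 ≤ t := by positivity
  have ht1 : t ≤ 1 := (div_le_one hy).mpr hxy
  have hxt : x = y * t := (mul_div_cancel₀ x hy.ne.symm).symm
  calc (x + y) ^ θ = y ^ θ * (1 + t) ^ θ := by
        rw [← mul_rpow hy.le (by positivity), hxt]; ring_nf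
    _ ≤ y ^ θ * (1 + θ * t ^ θ) := by
        gcongr
        calc (1 + t) ^ θ ≤ 1 + θ * t := rpow_one_add_le_one_add_mul_self (by linarith) hθ0 hθ1
          _ ≤ 1 + θ * t ^ θ := by gcongr; exact self_le_rpow_of_le_one ht0 ht1 hθ1
    _ = θ * x ^ θ + y ^ θ := by rw [hxt, mul_rpow hy.le ht0]; ring

theorem Real.rpow_mul_exp_rpow_le_of_le_add {a p θ x y z : ℝ} (ha : 0 ≤ a) (hp : 0 ≤ p)
    (hθ0 : 0 ≤ θ) (hθ1 : θ ≤ 1) (hx : 0 ≤ x) (hy : 0 ≤ y) (hz : 0 ≤ z) (hzxy : z ≤ x + y) :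
    z ^ p * exp (a * z ^ θ) ≤ 2 ^ p *
      (exp (a * θ * x ^ θ) * (y ^ p * exp (a * y ^ θ)) +
        x ^ p * exp (a * x ^ θ) * exp (a * θ * y ^ θ)) := by
  wlog hxy : x ≤ y generalizing x y
  · calc z ^ p * exp (a * z ^ θ) ≤ 2 ^ p *
          (exp (a * θ * y ^ θ) * (x ^ p * exp (a * x ^ θ)) +
            y ^ p * exp (a * y ^ θ) * exp (a * θ * x ^ θ)) :=
          this hy hx (by linarith) (by linarith)
      _ = _ := by ring
  have hpow : z ^ p ≤ 2 ^ p * y ^ p := by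
    rw [← mul_rpow zero_le_two hy]
    exact rpow_le_rpow hz (by linarith) hp
  have hexp : a * z ^ θ ≤ a * θ * x ^ θ + a * y ^ θ := by
    have := (rpow_le_rpow hz hzxy hθ0).trans (rpow_add_le_mul_rpow_add_rpow hx hxy hθ0 hθ1)
    nlinarith
  calc z ^ p * exp (a * z ^ θ) ≤ (2 ^ p * y ^ p) * exp (a * θ * x ^ θ + a * y ^ θ) := by
        gcongr
    _ = 2 ^ p * (exp (a * θ * x ^ θ) * (y ^ p * exp (a * y ^ θ))) := by rw [exp_add]; ring
    _ ≤ _ := by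
        gcongr
        exact le_add_of_nonneg_right (by positivity)

def gevreyWeight {E : Type*} [Norm E] (a σ t : ℝ) (ξ : E) : ℝ≥0∞ :=
  ENNReal.ofReal (‖ξ‖ ^ t * Real.exp (a * ‖ξ‖ ^ (1 / σ)))

def gevreyDensity (a σ t : ℝ) (F : R3 → ℂ) (ξ : R3) : ℝ≥0∞ :=
  gevreyWeight a σ t ξ * ‖F ξ‖₊

theorem measurable_gevreyDensity (a σ t : ℝ) {F : R3 → ℂ} (hF : Measurable F) :
    Measurable (gevreyDensity a σ t F) := by
  unfold gevreyDensity gevreyWeight; fun_prop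

theorem gevreyWeight_add_le {E : Type*} [SeminormedAddGroup E] {a σ p : ℝ} (ha : 0 ≤ a)
    (hσ : 1 ≤ σ) (hp : 0 ≤ p) (ζ η : E) :
    gevreyWeight a σ p (ζ + η) ≤ ((2 : ℝ≥0) ^ p : ℝ≥0) *
      (gevreyWeight (a / σ) σ 0 ζ * gevreyWeight a σ p η +
        gevreyWeight a σ p ζ * gevreyWeight (a / σ) σ 0 η) := by
  have hθ1 : 1 / σ ≤ 1 := (div_le_one (by linarith)).mpr hσ
  have key := Real.rpow_mul_exp_rpow_le_of_le_add ha hp (by positivity) hθ1 (norm_nonneg ζ)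
    (norm_nonneg η) (norm_nonneg _) (norm_add_le ζ η)
  rw [mul_one_div] at key
  simp only [gevreyWeight, Real.rpow_zero, one_mul]
  rw [← ENNReal.ofReal_mul (by positivity), ← ENNReal.ofReal_mul (by positivity),
    ← ENNReal.ofReal_add (by positivity) (by positivity), ← ENNReal.ofReal_coe_nnreal,
    ← ENNReal.ofReal_mul (by positivity), NNReal.coe_rpow, NNReal.coe_ofNat]
  exact ENNReal.ofReal_le_ofReal (by simpa only [mul_assoc] using key)

theorem gevreyNorm_eq_eLpNorm (a σ t : ℝ) (F : R3 → ℂ) :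
    gevreyNorm a σ t F = eLpNorm (gevreyDensity a σ t F) 2 volume := by
  have hsq (ξ : R3) : ENNReal.ofReal (‖ξ‖ ^ (2 * t) * Real.exp (2 * a * ‖ξ‖ ^ (1 / σ))) =
      gevreyWeight a σ t ξ ^ 2 := by
    rw [gevreyWeight, ← ENNReal.ofReal_pow (by positivity), mul_pow, mul_comm 2 t,
      Real.rpow_mul (norm_nonneg ξ), Real.rpow_two, ← Real.exp_nat_mul]
    ring_nf
  rw [eLpNorm_eq_lintegral_rpow_enorm_toReal (by norm_num) (by norm_num), gevreyNorm, gevreySq]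
  simp only [hsq]
  simp [gevreyDensity, mul_pow]

theorem weightedL1_eq_eLpNorm (c σ : ℝ) (F : R3 → ℂ) :
    weightedL1 c σ F = eLpNorm (gevreyDensity c σ 0 F) 1 volume := by
  simp [weightedL1, gevreyDensity, gevreyWeight, eLpNorm_one_eq_lintegral_enorm]

theorem ENNReal.sq_rpow_half (x : ℝ≥0∞) : (x ^ 2) ^ (1 / 2 : ℝ) = x := by
  simpa using ENNReal.pow_rpow_inv_natCast two_ne_zero x

section Young

variable {G : Type*} [AddCommGroup G] [MeasurableSpace G] [MeasurableAdd₂ G] [MeasurableNeg G]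
  {μ : Measure G} [μ.IsAddLeftInvariant] [μ.IsNegInvariant]

theorem lintegral_comp_neg_add_eq_self (g : G → ℝ≥0∞) (x : G) :
    ∫⁻ y, g (-y + x) ∂μ = ∫⁻ y, g y ∂μ := by
  simpa [add_comm] using lintegral_neg_eq_self (μ := μ) (fun y => g (x + y))
    |>.trans (lintegral_add_left_eq_self g x)

theorem lconvolution_sq_le {f g : G → ℝ≥0∞} (hf : Measurable f) (hg : Measurable g) (x : G) :
    (f ⋆ₗ[μ] g) x ^ 2 ≤ (∫⁻ y, g y ∂μ) * ∫⁻ y, f y ^ 2 * g (-y + x) ∂μ := by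
  have hgx : Measurable fun y => g (-y + x) := hg.comp (by fun_prop)
  have hCS := ENNReal.lintegral_mul_norm_pow_le (μ := μ) hgx.aemeasurable
    ((hf.pow_const 2).mul hgx).aemeasurable (p := 1 / 2) (q := 1 / 2)
    (by norm_num) (by norm_num) (by norm_num)
  have hsqrt (y : G) : g (-y + x) ^ (1 / 2 : ℝ) * (f y ^ 2 * g (-y + x)) ^ (1 / 2 : ℝ) =
      f y * g (-y + x) := by
    rw [← ENNReal.mul_rpow_of_nonneg _ _ (by norm_num), ← ENNReal.sq_rpow_half (f y * _)]
    ring_nf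
  simp only [Pi.mul_apply, hsqrt, lintegral_comp_neg_add_eq_self] at hCS
  calc (f ⋆ₗ[μ] g) x ^ 2
      ≤ ((∫⁻ y, g y ∂μ) ^ (1 / 2 : ℝ) * (∫⁻ y, f y ^ 2 * g (-y + x) ∂μ) ^ (1 / 2 : ℝ)) ^ 2 :=
        pow_le_pow_left' hCS 2
    _ = (∫⁻ y, g y ∂μ) * ∫⁻ y, f y ^ 2 * g (-y + x) ∂μ := by
        rw [mul_pow, ← ENNReal.rpow_two, ← ENNReal.rpow_two, ← ENNReal.rpow_mul,
          ← ENNReal.rpow_mul]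
        norm_num

variable [SFinite μ]

theorem eLpNorm_lconvolution_le {f g : G → ℝ≥0∞} (hf : Measurable f) (hg : Measurable g) :
    eLpNorm (f ⋆ₗ[μ] g) 2 μ ≤ eLpNorm f 2 μ * eLpNorm g 1 μ := by
  have hmeas : Measurable (Function.uncurry fun x y => f y ^ 2 * g (-y + x)) := by
    fun_prop
  have hsq : ∫⁻ x, (f ⋆ₗ[μ] g) x ^ 2 ∂μ ≤ (∫⁻ y, f y ^ 2 ∂μ) * (∫⁻ y, g y ∂μ) ^ 2 :=
    calc ∫⁻ x, (f ⋆ₗ[μ] g) x ^ 2 ∂μ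
        ≤ ∫⁻ x, (∫⁻ y, g y ∂μ) * ∫⁻ y, f y ^ 2 * g (-y + x) ∂μ ∂μ :=
          lintegral_mono (lconvolution_sq_le hf hg)
      _ = (∫⁻ y, g y ∂μ) * ∫⁻ y, ∫⁻ x, f y ^ 2 * g (-y + x) ∂μ ∂μ := by
          rw [lintegral_const_mul _ hmeas.lintegral_prod_right,
            lintegral_lintegral_swap hmeas.aemeasurable]
      _ = (∫⁻ y, f y ^ 2 ∂μ) * (∫⁻ y, g y ∂μ) ^ 2 := by
          have hinner (y : G) : ∫⁻ x, f y ^ 2 * g (-y + x) ∂μ = f y ^ 2 * ∫⁻ x, g x ∂μ := by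
            rw [lintegral_const_mul _ (f := fun x => g (-y + x))
              (hg.comp (measurable_const_add (-y))), lintegral_add_left_eq_self]
          simp only [hinner]
          rw [lintegral_mul_const _ (hf.pow_const 2)]
          ring
  rw [eLpNorm_eq_lintegral_rpow_enorm_toReal (by norm_num) (by norm_num),
    eLpNorm_eq_lintegral_rpow_enorm_toReal (by norm_num) (by norm_num),
    eLpNorm_one_eq_lintegral_enorm]
  simp only [enorm_eq_self, ENNReal.toReal_ofNat, ENNReal.rpow_two]
  calc (∫⁻ x, (f ⋆ₗ[μ] g) x ^ 2 ∂μ) ^ (1 / 2 : ℝ)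
      ≤ ((∫⁻ y, f y ^ 2 ∂μ) * (∫⁻ y, g y ∂μ) ^ 2) ^ (1 / 2 : ℝ) := by gcongr
    _ = _ := by rw [ENNReal.mul_rpow_of_nonneg _ _ (by norm_num), ENNReal.sq_rpow_half]

end Young

theorem gevreyDensity_fconv_le {a σ p : ℝ} (ha : 0 ≤ a) (hσ : 1 ≤ σ) (hp : 0 ≤ p)
    {F G : R3 → ℂ} (hF : Measurable F) (hG : Measurable G) (ξ : R3) :
    gevreyDensity a σ p (fconv F G) ξ ≤ ((2 : ℝ≥0) ^ p : ℝ≥0) *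
      ((gevreyDensity a σ p G ⋆ₗ gevreyDensity (a / σ) σ 0 F) ξ +
        (gevreyDensity (a / σ) σ 0 G ⋆ₗ gevreyDensity a σ p F) ξ) := by
  have hconv : (‖fconv F G ξ‖₊ : ℝ≥0∞) ≤ ∫⁻ η, ‖F (ξ - η)‖₊ * ‖G η‖₊ := by
    refine (enorm_integral_le_lintegral_enorm _).trans_eq ?_
    simp [enorm_eq_nnnorm]
  have hsplit (η : R3) : gevreyWeight a σ p ξ * (‖F (ξ - η)‖₊ * ‖G η‖₊) ≤
      ((2 : ℝ≥0) ^ p : ℝ≥0) * (gevreyDensity a σ p G η * gevreyDensity (a / σ) σ 0 F (-η + ξ) +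
        gevreyDensity (a / σ) σ 0 G η * gevreyDensity a σ p F (-η + ξ)) := by
    have h := gevreyWeight_add_le ha hσ hp (ξ - η) η
    rw [sub_add_cancel] at h
    calc _ ≤ _ := mul_le_mul_left h _
      _ = _ := by simp only [gevreyDensity, neg_add_eq_sub]; ring
  calc gevreyDensity a σ p (fconv F G) ξ
      ≤ gevreyWeight a σ p ξ * ∫⁻ η, ‖F (ξ - η)‖₊ * ‖G η‖₊ := mul_le_mul_right hconv _
    _ = ∫⁻ η, gevreyWeight a σ p ξ * (‖F (ξ - η)‖₊ * ‖G η‖₊) :=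
        (lintegral_const_mul' _ _ ENNReal.ofReal_ne_top).symm
    _ ≤ _ := lintegral_mono hsplit
    _ = _ := by
        rw [lintegral_const_mul' _ _ ENNReal.coe_ne_top, lintegral_add_left (by
          have := measurable_gevreyDensity a σ p hG
          have := measurable_gevreyDensity (a / σ) σ 0 hF
          fun_prop)]
        rfl

theorem gevreyNorm_fconv_le {a σ p : ℝ} (ha : 0 ≤ a) (hσ : 1 ≤ σ) (hp : 0 ≤ p)
    {F G : R3 → ℂ} (hF : Measurable F) (hG : Measurable G) :
    gevreyNorm a σ p (fconv F G) ≤ ((2 : ℝ≥0) ^ p : ℝ≥0) *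
      (weightedL1 (a / σ) σ F * gevreyNorm a σ p G +
        weightedL1 (a / σ) σ G * gevreyNorm a σ p F) := by
  have hFw := measurable_gevreyDensity a σ p hF
  have hFe := measurable_gevreyDensity (a / σ) σ 0 hF
  have hGw := measurable_gevreyDensity a σ p hG
  have hGe := measurable_gevreyDensity (a / σ) σ 0 hG
  simp only [gevreyNorm_eq_eLpNorm, weightedL1_eq_eLpNorm]
  calc eLpNorm (gevreyDensity a σ p (fconv F G)) 2 volume
      ≤ ((2 : ℝ≥0) ^ p : ℝ≥0) • eLpNorm (gevreyDensity a σ p G ⋆ₗ gevreyDensity (a / σ) σ 0 F +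
          gevreyDensity a σ p F ⋆ₗ gevreyDensity (a / σ) σ 0 G) 2 volume := by
        refine eLpNorm_le_nnreal_smul_eLpNorm_of_ae_le_mul' (ae_of_all _ fun ξ => ?_) 2
        simpa only [enorm_eq_self, Pi.add_apply, lconvolution_comm (f := gevreyDensity _ _ 0 G)]
          using gevreyDensity_fconv_le ha hσ hp hF hG ξ
    _ ≤ ((2 : ℝ≥0) ^ p : ℝ≥0) *
          (eLpNorm (gevreyDensity a σ p G ⋆ₗ gevreyDensity (a / σ) σ 0 F) 2 volume +
            eLpNorm (gevreyDensity a σ p F ⋆ₗ gevreyDensity (a / σ) σ 0 G) 2 volume) := by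
        rw [ENNReal.smul_def, smul_eq_mul]
        gcongr
        exact eLpNorm_add_le (measurable_lconvolution _ hGw hFe).aestronglyMeasurable
          (measurable_lconvolution _ hFw hGe).aestronglyMeasurable one_le_two
    _ ≤ _ := by
        rw [mul_comm (eLpNorm (gevreyDensity _ _ 0 F) _ _),
          mul_comm (eLpNorm (gevreyDensity _ _ 0 G) _ _)]
        gcongr
        exacts [eLpNorm_lconvolution_le hGw hFe, eLpNorm_lconvolution_le hFw hGe]

theorem gevreySq_interpolate {a σ s t θ : ℝ} (hθ0 : 0 ≤ θ) (hθ1 : θ ≤ 1) {F : R3 → ℂ}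
    (hF : Measurable F) :
    gevreySq a σ ((1 - θ) * s + θ * t) F ≤ gevreySq a σ s F ^ (1 - θ) * gevreySq a σ t F ^ θ := by
  have hθ' : 0 ≤ 1 - θ := by linarith
  unfold gevreySq
  have hweight {ξ : R3} (hξ : ξ ≠ 0) (E : ℝ) (hE : 0 ≤ E) :
      (‖ξ‖ ^ (2 * s) * E) ^ (1 - θ) * (‖ξ‖ ^ (2 * t) * E) ^ θ =
        ‖ξ‖ ^ (2 * ((1 - θ) * s + θ * t)) * E := by
    have hr : 0 < ‖ξ‖ := norm_pos_iff.mpr hξ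
    rw [Real.mul_rpow (by positivity) hE, Real.mul_rpow (by positivity) hE,
      ← Real.rpow_mul hr.le, ← Real.rpow_mul hr.le, mul_mul_mul_comm, ← Real.rpow_add hr,
      ← Real.rpow_add' hE (by norm_num), sub_add_cancel, Real.rpow_one]
    ring_nf
  refine (lintegral_congr_ae ?_).trans_le
    (ENNReal.lintegral_mul_norm_pow_le (by fun_prop) (by fun_prop) hθ' hθ0 (by ring))
  filter_upwards [compl_mem_ae_iff.2 (measure_singleton (0 : R3))] with ξ hξ
  rw [ENNReal.mul_rpow_of_nonneg _ _ hθ', ENNReal.mul_rpow_of_nonneg _ _ hθ0,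
    mul_mul_mul_comm, ← ENNReal.rpow_add_of_nonneg _ _ hθ' hθ0, sub_add_cancel,
    ENNReal.rpow_one, ENNReal.ofReal_rpow_of_nonneg (by positivity) hθ',
    ENNReal.ofReal_rpow_of_nonneg (by positivity) hθ0, ← ENNReal.ofReal_mul (by positivity),
    hweight hξ _ (Real.exp_pos _).le]

theorem gevreyNorm_interpolate {a σ s t θ : ℝ} (hθ0 : 0 ≤ θ) (hθ1 : θ ≤ 1) {F : R3 → ℂ}
    (hF : Measurable F) :
    gevreyNorm a σ ((1 - θ) * s + θ * t) F ≤
      gevreyNorm a σ s F ^ (1 - θ) * gevreyNorm a σ t F ^ θ := by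
  simp only [gevreyNorm, ← ENNReal.rpow_mul]
  rw [mul_comm _ (1 - θ), mul_comm _ θ, ENNReal.rpow_mul, ENNReal.rpow_mul _ θ,
    ← ENNReal.mul_rpow_of_nonneg _ _ (by norm_num)]
  exact ENNReal.rpow_le_rpow (gevreySq_interpolate hθ0 hθ1 hF) (by norm_num)

theorem gevreyNorm_lt_top_iff {a σ t : ℝ} {F : R3 → ℂ} :
    gevreyNorm a σ t F < ⊤ ↔ gevreySq a σ t F < ⊤ :=
  ENNReal.rpow_lt_top_iff_of_pos (by norm_num)

theorem gevreyNorm_add_one_le {a σ s β : ℝ} (hβ : 1 ≤ β) {F : R3 → ℂ} (hF : Measurable F) :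
    gevreyNorm a σ (s + 1) F ≤
      gevreyNorm a σ s F ^ (1 - 1 / β) * gevreyNorm a σ (s + β) F ^ (1 / β) := by
  have h := gevreyNorm_interpolate (a := a) (σ := σ) (s := s) (t := s + β)
    (by positivity) ((div_le_one (by positivity)).mpr hβ) hF
  rwa [show (1 - 1 / β) * s + 1 / β * (s + β) = s + 1 by field_simp; ring] at h

theorem gevreyNorm_add_one_lt_top {a σ s β : ℝ} (hβ : 1 ≤ β) {F : R3 → ℂ} (hF : Measurable F)
    (hs : gevreySq a σ s F < ⊤) (hsβ : gevreySq a σ (s + β) F < ⊤) :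
    gevreyNorm a σ (s + 1) F < ⊤ :=
  (gevreyNorm_add_one_le hβ hF).trans_lt <| ENNReal.mul_lt_top
    (ENNReal.rpow_lt_top_of_nonneg (sub_nonneg.mpr ((div_le_one (by positivity)).mpr hβ))
      (gevreyNorm_lt_top_iff.mpr hs).ne)
    (ENNReal.rpow_lt_top_of_nonneg (by positivity) (gevreyNorm_lt_top_iff.mpr hsβ).ne)

theorem gevrey_product_interpolation_L1_general (a σ s α β : ℝ) (ha : 0 < a) (hσ : 1 < σ)
    (hs1 : -1 ≤ s) (hα : 1 ≤ α) (hβ : 1 ≤ β) :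
    ∃ C : ℝ, 0 < C ∧ ∀ F G : R3 → ℂ, Measurable F → Measurable G →
      gevreySq a σ s F < ⊤ → gevreySq a σ (s + α) F < ⊤ →
      gevreySq a σ s G < ⊤ → gevreySq a σ (s + β) G < ⊤ →
      weightedL1 (a / σ) σ F < ⊤ → weightedL1 (a / σ) σ G < ⊤ →
      gevreySq a σ (s + 1) (fconv F G) < ⊤ ∧
      gevreyNorm a σ (s + 1) (fconv F G) ≤ ENNReal.ofReal C *
        (weightedL1 (a / σ) σ F * gevreyNorm a σ s G ^ (1 - 1 / β) *
            gevreyNorm a σ (s + β) G ^ (1 / β) +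
          weightedL1 (a / σ) σ G * gevreyNorm a σ s F ^ (1 - 1 / α) *
            gevreyNorm a σ (s + α) F ^ (1 / α)) := by
  refine ⟨(((2 : ℝ≥0) ^ (s + 1) : ℝ≥0) : ℝ), by positivity,
    fun F G hF hG hFs hFsα hGs hGsβ hWF hWG => ?_⟩
  rw [ENNReal.ofReal_coe_nnreal]
  have hconv := gevreyNorm_fconv_le (p := s + 1) ha.le hσ.le (by linarith) hF hG
  have hF1 := gevreyNorm_add_one_lt_top hα hF hFs hFsα
  have hG1 := gevreyNorm_add_one_lt_top hβ hG hGs hGsβ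
  refine ⟨gevreyNorm_lt_top_iff.mp (hconv.trans_lt (by finiteness)), hconv.trans ?_⟩
  simp only [mul_assoc]
  gcongr
  exacts [gevreyNorm_add_one_le hβ hG, gevreyNorm_add_one_le hα hF]

/-- (Lemma 2.5 i) of the paper).
Let `a > 0`, `σ > 1`, `s ∈ [-1, 3/2)`, `α ≥ 1`, `β ≥ 1`.  There is `C = C(s) > 0` such
that for `f ∈ Ḣ^s_{a,σ} ∩ Ḣ^{s+α}_{a,σ}` and `g ∈ Ḣ^s_{a,σ} ∩ Ḣ^{s+β}_{a,σ}` with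
`e^{(a/σ)|·|^{1/σ}} f̂, e^{(a/σ)|·|^{1/σ}} ĝ ∈ L¹`, the product `fg` lies in
`Ḣ^{s+1}_{a,σ}` and
`‖fg‖_{Ḣ^{s+1}} ≤ C [‖e^{(a/σ)|·|^{1/σ}}f̂‖_{L¹}‖g‖_{Ḣ^s}^{1-1/β}‖g‖_{Ḣ^{s+β}}^{1/β}
+ ‖e^{(a/σ)|·|^{1/σ}}ĝ‖_{L¹}‖f‖_{Ḣ^s}^{1-1/α}‖f‖_{Ḣ^{s+α}}^{1/α}]`.
Everything is phrased on the Fourier side (`F = f̂`, `G = ĝ`, and `fconv F G` is, up to a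
constant absorbed in `C`, the Fourier transform of `fg`). -/
theorem gevrey_product_interpolation_L1 (a σ s α β : ℝ) (ha : 0 < a) (hσ : 1 < σ)
    (hs1 : -1 ≤ s) (hs2 : s < 3 / 2) (hα : 1 ≤ α) (hβ : 1 ≤ β) :
    ∃ C : ℝ, 0 < C ∧ ∀ F G : R3 → ℂ, Measurable F → Measurable G →
      gevreySq a σ s F < ⊤ → gevreySq a σ (s + α) F < ⊤ →
      gevreySq a σ s G < ⊤ → gevreySq a σ (s + β) G < ⊤ →
      weightedL1 (a / σ) σ F < ⊤ → weightedL1 (a / σ) σ G < ⊤ →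
      gevreySq a σ (s + 1) (fconv F G) < ⊤ ∧
      gevreyNorm a σ (s + 1) (fconv F G) ≤ ENNReal.ofReal C *
        (weightedL1 (a / σ) σ F * gevreyNorm a σ s G ^ (1 - 1 / β) *
            gevreyNorm a σ (s + β) G ^ (1 / β) +
          weightedL1 (a / σ) σ G * gevreyNorm a σ s F ^ (1 - 1 / α) *
            gevreyNorm a σ (s + α) F ^ (1 / α)) :=
  gevrey_product_interpolation_L1_general a σ s α β ha hσ hs1 hα hβ
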